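/- Let k ∈ C²([0,∞); ℝ) and u ∈ C¹([0,∞); ℝ) with u(0) = 0. Then for every t ≥ 0, ∫₀ᵗ k'(t−s) u(s) u'(t) ds = (1/2) d/dt [ (k(t) − k(0)) u(t)² − ∫₀ᵗ k'(t−s)(u(s) − u(t))² ds ] − (1/2) k'(t) u(t)² + (1/2) ∫₀ᵗ k''(t−s)(u(s) − u(t))² ds. -/
import Mathlib


open Set intervalIntegral MeasureTheory Function

lemma tri_swap (G : ℝ → ℝ → ℝ) (hG : Continuous (uncurry G)) {τ : ℝ} (hτ : 0 ≤ τ) :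
    ∫ σ in (0:ℝ)..τ, (∫ r in σ..τ, G σ r) = ∫ r in (0:ℝ)..τ, (∫ σ in (0:ℝ)..r, G σ r) := by
  have hint : IntegrableOn (uncurry G) (Icc (0:ℝ) τ ×ˢ Icc (0:ℝ) τ) volume := by
    exact hG.continuousOn.integrableOn_compact (isCompact_Icc.prod isCompact_Icc)
  have hS : MeasurableSet {p : ℝ × ℝ | p.1 < p.2} := measurableSet_lt measurable_fst measurable_snd
  have key : ∫ σ in Ioc (0:ℝ) τ, ∫ r in Ioc (0:ℝ) τ, ({p : ℝ × ℝ | p.1 < p.2}.indicator (uncurry G)) (σ, r)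
      = ∫ r in Ioc (0:ℝ) τ, ∫ σ in Ioc (0:ℝ) τ, ({p : ℝ × ℝ | p.1 < p.2}.indicator (uncurry G)) (σ, r) := by
    apply MeasureTheory.integral_integral_swap
    have : Integrable ({p : ℝ × ℝ | p.1 < p.2}.indicator (uncurry G))
        ((volume.restrict (Ioc (0:ℝ) τ)).prod (volume.restrict (Ioc (0:ℝ) τ))) := by
      rw [Measure.prod_restrict, ← Measure.volume_eq_prod]
      exact ((hint.mono_set (prod_mono Ioc_subset_Icc_self Ioc_subset_Icc_self)).indicator hS)
    exact this
  rw [intervalIntegral.integral_of_le hτ, intervalIntegral.integral_of_le hτ]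
  calc ∫ σ in Ioc (0:ℝ) τ, (∫ r in σ..τ, G σ r)
      = ∫ σ in Ioc (0:ℝ) τ, ∫ r in Ioc (0:ℝ) τ, ({p : ℝ × ℝ | p.1 < p.2}.indicator (uncurry G)) (σ, r) := by
        apply setIntegral_congr_fun measurableSet_Ioc
        intro σ hσ
        dsimp only
        have h1 : σ ≤ τ := hσ.2
        rw [intervalIntegral.integral_of_le h1]
        have : ∀ r, ({p : ℝ × ℝ | p.1 < p.2}.indicator (uncurry G)) (σ, r) = (Ioi σ).indicator (G σ) r := by
          intro r; simp only [Set.indicator_apply, mem_setOf_eq, mem_Ioi, Function.uncurry_apply_pair]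
        simp_rw [this]
        rw [setIntegral_indicator measurableSet_Ioi]
        have hset : Ioc (0:ℝ) τ ∩ Ioi σ = Ioc σ τ := by
          ext x
          simp only [mem_inter_iff, mem_Ioc, mem_Ioi]
          constructor
          · rintro ⟨⟨_, h3⟩, h4⟩; exact ⟨h4, h3⟩
          · rintro ⟨h2, h3⟩; exact ⟨⟨lt_of_le_of_lt hσ.1.le h2, h3⟩, h2⟩
        rw [hset]
    _ = ∫ r in Ioc (0:ℝ) τ, ∫ σ in Ioc (0:ℝ) τ, ({p : ℝ × ℝ | p.1 < p.2}.indicator (uncurry G)) (σ, r) := key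
    _ = ∫ r in Ioc (0:ℝ) τ, (∫ σ in (0:ℝ)..r, G σ r) := by
        apply setIntegral_congr_fun measurableSet_Ioc
        intro r hr
        dsimp only
        have : ∀ σ, ({p : ℝ × ℝ | p.1 < p.2}.indicator (uncurry G)) (σ, r) = (Iio r).indicator (fun σ => G σ r) σ := by
          intro σ; simp only [Set.indicator_apply, mem_setOf_eq, mem_Iio, Function.uncurry_apply_pair]
        simp_rw [this]
        have hset : Ioc (0:ℝ) τ ∩ Iio r = Ioo 0 r := by
          ext x
          simp only [mem_inter_iff, mem_Ioc, mem_Iio, mem_Ioo]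
          constructor
          · rintro ⟨⟨h1, _⟩, h2⟩; exact ⟨h1, h2⟩
          · rintro ⟨h1, h2⟩; exact ⟨⟨h1, h2.le.trans hr.2⟩, h2⟩
        rw [setIntegral_indicator measurableSet_Iio, hset,
          ← MeasureTheory.integral_Ioc_eq_integral_Ioo, ← intervalIntegral.integral_of_le hr.1.le]

lemma conv_deriv (f v v' : ℝ → ℝ) (hf : Continuous f)
    (hv : ∀ x, HasDerivAt v (v' x) x) (hv' : Continuous v') {t : ℝ} (ht : 0 ≤ t) :
    HasDerivWithinAt (fun τ => ∫ σ in (0:ℝ)..τ, f σ * v (τ - σ))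
      (v 0 * f t + ∫ σ in (0:ℝ)..t, f σ * v' (t - σ)) (Ici 0) t := by
  have hψc : Continuous (fun r => ∫ σ in (0:ℝ)..r, f σ * v' (r - σ)) := by
    apply intervalIntegral.continuous_parametric_intervalIntegral_of_continuous
      (f := fun r σ => f σ * v' (r - σ)) _ continuous_id
    exact (hf.comp continuous_snd).mul (hv'.comp (continuous_fst.sub continuous_snd))
  have h1 : ∀ τ σ : ℝ, v (τ - σ) = v 0 + ∫ r in σ..τ, v' (r - σ) := by
    intro τ σ
    rw [intervalIntegral.integral_comp_sub_right (fun x => v' x) σ, sub_self,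
      intervalIntegral.integral_eq_sub_of_hasDerivAt (fun x _ => hv x)
        (hv'.intervalIntegrable _ _)]
    ring
  have key : ∀ τ ∈ Ici (0:ℝ), (∫ σ in (0:ℝ)..τ, f σ * v (τ - σ))
      = v 0 * (∫ σ in (0:ℝ)..τ, f σ) + ∫ r in (0:ℝ)..τ, ∫ σ in (0:ℝ)..r, f σ * v' (r - σ) := by
    intro τ hτ
    have ig1 : IntervalIntegrable (fun σ => f σ * v 0) MeasureTheory.volume 0 τ :=
      (hf.mul continuous_const).intervalIntegrable _ _
    have hvc : Continuous v := continuous_iff_continuousAt.mpr fun x => (hv x).continuousAt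
    have ig2 : IntervalIntegrable (fun σ => f σ * (v (τ - σ) - v 0)) MeasureTheory.volume 0 τ :=
      (hf.mul ((hvc.comp (continuous_const.sub continuous_id)).sub continuous_const)).intervalIntegrable _ _
    have h2 : (∫ σ in (0:ℝ)..τ, f σ * v (τ - σ))
        = (∫ σ in (0:ℝ)..τ, f σ * v 0) + ∫ σ in (0:ℝ)..τ, f σ * (v (τ - σ) - v 0) := by
      rw [← intervalIntegral.integral_add ig1 ig2]
      apply intervalIntegral.integral_congr
      intro σ _
      dsimp only
      ring
    rw [h2]
    congr 1
    · rw [intervalIntegral.integral_mul_const, mul_comm]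
    · have h3 : (∫ σ in (0:ℝ)..τ, f σ * (v (τ - σ) - v 0))
          = ∫ σ in (0:ℝ)..τ, ∫ r in σ..τ, f σ * v' (r - σ) := by
        apply intervalIntegral.integral_congr
        intro σ _
        dsimp only
        rw [h1 τ σ, intervalIntegral.integral_const_mul]
        ring
      rw [h3]
      exact tri_swap (fun σ r => f σ * v' (r - σ))
        ((hf.comp continuous_fst).mul (hv'.comp (continuous_snd.sub continuous_fst))) hτ
  have hD1 : HasDerivAt (fun τ => ∫ σ in (0:ℝ)..τ, f σ) (f t) t :=
    intervalIntegral.integral_hasDerivAt_right (hf.intervalIntegrable _ _)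
      (hf.stronglyMeasurableAtFilter _ _) hf.continuousAt
  have hD2 : HasDerivAt (fun τ => ∫ r in (0:ℝ)..τ, ∫ σ in (0:ℝ)..r, f σ * v' (r - σ))
      (∫ σ in (0:ℝ)..t, f σ * v' (t - σ)) t :=
    intervalIntegral.integral_hasDerivAt_right (hψc.intervalIntegrable _ _)
      (hψc.stronglyMeasurableAtFilter _ _) hψc.continuousAt
  exact (((hD1.const_mul (v 0)).add hD2).hasDerivWithinAt).congr key (key t ht)

lemma ftc0 (F F' : ℝ → ℝ) (hF : ∀ x ∈ Ici (0:ℝ), HasDerivWithinAt F (F' x) (Ici 0) x)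
    (hF' : ContinuousOn F' (Ici 0)) {τ : ℝ} (hτ : 0 ≤ τ) :
    ∫ s in (0:ℝ)..τ, F' (τ - s) = F τ - F 0 := by
  rw [intervalIntegral.integral_comp_sub_left F' τ, sub_self, sub_zero]
  apply intervalIntegral.integral_eq_sub_of_hasDeriv_right_of_le hτ
  · exact fun x hx => ((hF x hx.1).continuousWithinAt).mono (fun y hy => hy.1)
  · intro x hx
    exact (hF x hx.1.le).mono (fun y hy => (lt_trans hx.1 hy).le)
  · apply ContinuousOn.intervalIntegrable
    rw [uIcc_of_le hτ]
    exact hF'.mono (fun y hy => hy.1)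


/-- Lemma on quadratic convolution forms: for k ∈ C²([0,∞)) and u ∈ C¹([0,∞)) with u(0)=0,
∫₀ᵗ k'(t−s) u(s) u'(t) ds = ½ d/dt[(k(t)−k(0))u(t)² − ∫₀ᵗ k'(t−s)(u(s)−u(t))² ds]
  − ½ k'(t) u(t)² + ½ ∫₀ᵗ k''(t−s)(u(s)−u(t))² ds. -/
theorem convolution_quadratic_form_identity
    (k k' k'' u u' : ℝ → ℝ)
    (hk : ∀ t ∈ Ici (0 : ℝ), HasDerivWithinAt k (k' t) (Ici 0) t)
    (hk' : ∀ t ∈ Ici (0 : ℝ), HasDerivWithinAt k' (k'' t) (Ici 0) t)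
    (hk'' : ContinuousOn k'' (Ici 0))
    (hu : ∀ t ∈ Ici (0 : ℝ), HasDerivWithinAt u (u' t) (Ici 0) t)
    (hu' : ContinuousOn u' (Ici 0))
    (hu0 : u 0 = 0) :
    ∀ t ≥ (0 : ℝ), ∃ g : ℝ,
      HasDerivWithinAt
        (fun τ => (k τ - k 0) * (u τ) ^ 2 - ∫ s in (0 : ℝ)..τ, k' (τ - s) * (u s - u τ) ^ 2)
        g (Ici 0) t ∧
      (∫ s in (0 : ℝ)..t, k' (t - s) * u s * u' t)
        = (1 / 2) * g - (1 / 2) * k' t * (u t) ^ 2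
          + (1 / 2) * ∫ s in (0 : ℝ)..t, k'' (t - s) * (u s - u t) ^ 2 := by
  intro t ht
  have hucont : ContinuousOn u (Ici 0) := fun x hx => (hu x hx).continuousWithinAt
  have hk'cont : ContinuousOn k' (Ici 0) := fun x hx => (hk' x hx).continuousWithinAt
  set uE : ℝ → ℝ := fun x => u (max x 0) with huEdef
  set u2E : ℝ → ℝ := fun x => (u (max x 0)) ^ 2 with hu2Edef
  set kE' : ℝ → ℝ := fun x => if x ≤ 0 then k' 0 + k'' 0 * x else k' x with hkE'def
  set kE'' : ℝ → ℝ := fun x => k'' (max x 0) with hkE''def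
  have hmax : Continuous fun x : ℝ => max x 0 := continuous_id.max continuous_const
  have hmaxmem : ∀ x : ℝ, max x 0 ∈ Ici (0 : ℝ) := fun x => le_max_right x 0
  have huEc : Continuous uE := hucont.comp_continuous hmax hmaxmem
  have hu2Ec : Continuous u2E := (hucont.comp_continuous hmax hmaxmem).pow 2
  have hkE''c : Continuous kE'' := hk''.comp_continuous hmax hmaxmem
  have hkE'eq : ∀ x : ℝ, 0 ≤ x → kE' x = k' x := by
    intro x hx
    rw [hkE'def]
    dsimp only
    split_ifs with h
    · have hx0 : x = 0 := le_antisymm h hx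
      simp [hx0]
    · rfl
  have huEeq : ∀ x : ℝ, 0 ≤ x → uE x = u x := by
    intro x hx; rw [huEdef]; dsimp only; rw [max_eq_left hx]
  have hu2Eeq : ∀ x : ℝ, 0 ≤ x → u2E x = (u x) ^ 2 := by
    intro x hx; rw [hu2Edef]; dsimp only; rw [max_eq_left hx]
  have hkE''eq : ∀ x : ℝ, 0 ≤ x → kE'' x = k'' x := by
    intro x hx; rw [hkE''def]; dsimp only; rw [max_eq_left hx]
  have hkE'deriv : ∀ x : ℝ, HasDerivAt kE' (kE'' x) x := by
    intro x
    rcases lt_trichotomy x 0 with hx | hx | hx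
    · have haff : HasDerivAt (fun y : ℝ => k' 0 + k'' 0 * y) (k'' 0) x := by
        simpa using ((hasDerivAt_id x).const_mul (k'' 0)).const_add (k' 0)
      have heq : kE' =ᶠ[nhds x] fun y => k' 0 + k'' 0 * y := by
        filter_upwards [Iio_mem_nhds hx] with y hy
        rw [hkE'def]; dsimp only; rw [if_pos (le_of_lt hy)]
      have h0 : kE'' x = k'' 0 := by
        rw [hkE''def]; dsimp only; rw [max_eq_right (le_of_lt hx)]
      rw [h0]
      exact haff.congr_of_eventuallyEq heq
    · subst hx
      have hleft : HasDerivWithinAt kE' (k'' 0) (Iic 0) 0 := by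
        have haff : HasDerivAt (fun y : ℝ => k' 0 + k'' 0 * y) (k'' 0) 0 := by
          simpa using ((hasDerivAt_id (0 : ℝ)).const_mul (k'' 0)).const_add (k' 0)
        apply haff.hasDerivWithinAt.congr
        · intro y hy; rw [hkE'def]; dsimp only; rw [if_pos (mem_Iic.mp hy)]
        · rw [hkE'def]; dsimp only; rw [if_pos le_rfl]
      have hright : HasDerivWithinAt kE' (k'' 0) (Ici 0) 0 := by
        apply (hk' 0 (mem_Ici.mpr le_rfl)).congr
        · intro y hy; exact hkE'eq y hy
        · exact hkE'eq 0 le_rfl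
      have hu0' := hleft.union hright
      rw [Iic_union_Ici] at hu0'
      have h0 : kE'' 0 = k'' 0 := hkE''eq 0 le_rfl
      rw [h0]
      exact hasDerivWithinAt_univ.mp hu0'
    · have heq : kE' =ᶠ[nhds x] k' := by
        filter_upwards [Ioi_mem_nhds hx] with y hy
        exact hkE'eq y (le_of_lt hy)
      have h0 : kE'' x = k'' x := hkE''eq x hx.le
      rw [h0]
      exact ((hk' x (mem_Ici.mpr hx.le)).hasDerivAt (Ici_mem_nhds hx)).congr_of_eventuallyEq heq
  have hkE'c : Continuous kE' :=
    continuous_iff_continuousAt.mpr fun x => (hkE'deriv x).continuousAt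
  -- FTC constants
  have hCk : ∀ τ : ℝ, 0 ≤ τ → (∫ s in (0 : ℝ)..τ, kE' (τ - s)) = k τ - k 0 := by
    intro τ hτ
    have hcg : (∫ s in (0 : ℝ)..τ, kE' (τ - s)) = ∫ s in (0 : ℝ)..τ, k' (τ - s) := by
      apply intervalIntegral.integral_congr
      rw [uIcc_of_le hτ]
      intro s hs
      exact hkE'eq _ (sub_nonneg.mpr hs.2)
    rw [hcg]
    exact ftc0 k k' hk hk'cont hτ
  have hCk' : (∫ s in (0 : ℝ)..t, kE'' (t - s)) = k' t - k' 0 := by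
    have hcg : (∫ s in (0 : ℝ)..t, kE'' (t - s)) = ∫ s in (0 : ℝ)..t, k'' (t - s) := by
      apply intervalIntegral.integral_congr
      rw [uIcc_of_le ht]
      intro s hs
      exact hkE''eq _ (sub_nonneg.mpr hs.2)
    rw [hcg]
    exact ftc0 k' k'' hk' hk'' ht
  -- derivatives of the convolution pieces
  have hA := conv_deriv uE kE' kE'' huEc hkE'deriv hkE''c ht
  have hB := conv_deriv u2E kE' kE'' hu2Ec hkE'deriv hkE''c ht
  -- integrability facts (parameterized by τ)
  have igA : ∀ τ : ℝ, IntervalIntegrable (fun σ => uE σ * kE' (τ - σ)) MeasureTheory.volume 0 τ :=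
    fun τ => (huEc.mul (hkE'c.comp (continuous_const.sub continuous_id))).intervalIntegrable _ _
  have igB : ∀ τ : ℝ, IntervalIntegrable (fun σ => u2E σ * kE' (τ - σ)) MeasureTheory.volume 0 τ :=
    fun τ => (hu2Ec.mul (hkE'c.comp (continuous_const.sub continuous_id))).intervalIntegrable _ _
  have igC : ∀ τ : ℝ, IntervalIntegrable (fun σ => kE' (τ - σ)) MeasureTheory.volume 0 τ :=
    fun τ => (hkE'c.comp (continuous_const.sub continuous_id)).intervalIntegrable _ _
  have igA2 : IntervalIntegrable (fun σ => uE σ * kE'' (t - σ)) MeasureTheory.volume 0 t :=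
    (huEc.mul (hkE''c.comp (continuous_const.sub continuous_id))).intervalIntegrable _ _
  have igB2 : IntervalIntegrable (fun σ => u2E σ * kE'' (t - σ)) MeasureTheory.volume 0 t :=
    (hu2Ec.mul (hkE''c.comp (continuous_const.sub continuous_id))).intervalIntegrable _ _
  have igC2 : IntervalIntegrable (fun σ => kE'' (t - σ)) MeasureTheory.volume 0 t :=
    (hkE''c.comp (continuous_const.sub continuous_id)).intervalIntegrable _ _
  -- expansion of the quadratic integrals
  have hexp : ∀ τ : ℝ, 0 ≤ τ → (∫ s in (0 : ℝ)..τ, k' (τ - s) * (u s - u τ) ^ 2)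
      = (∫ σ in (0 : ℝ)..τ, u2E σ * kE' (τ - σ))
        - 2 * u τ * (∫ σ in (0 : ℝ)..τ, uE σ * kE' (τ - σ))
        + (u τ) ^ 2 * ∫ s in (0 : ℝ)..τ, kE' (τ - s) := by
    intro τ hτ
    rw [← intervalIntegral.integral_const_mul (2 * u τ),
      ← intervalIntegral.integral_const_mul ((u τ) ^ 2),
      ← intervalIntegral.integral_sub (igB τ) ((igA τ).const_mul _),
      ← intervalIntegral.integral_add ((igB τ).sub ((igA τ).const_mul _)) ((igC τ).const_mul _)]
    apply intervalIntegral.integral_congr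
    rw [uIcc_of_le hτ]
    intro s hs
    dsimp only
    rw [huEeq s hs.1, hu2Eeq s hs.1, hkE'eq (τ - s) (sub_nonneg.mpr hs.2)]
    ring
  have hexp2 : (∫ s in (0 : ℝ)..t, k'' (t - s) * (u s - u t) ^ 2)
      = (∫ σ in (0 : ℝ)..t, u2E σ * kE'' (t - σ))
        - 2 * u t * (∫ σ in (0 : ℝ)..t, uE σ * kE'' (t - σ))
        + (u t) ^ 2 * ∫ s in (0 : ℝ)..t, kE'' (t - s) := by
    rw [← intervalIntegral.integral_const_mul (2 * u t),
      ← intervalIntegral.integral_const_mul ((u t) ^ 2),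
      ← intervalIntegral.integral_sub igB2 (igA2.const_mul _),
      ← intervalIntegral.integral_add (igB2.sub (igA2.const_mul _)) (igC2.const_mul _)]
    apply intervalIntegral.integral_congr
    rw [uIcc_of_le ht]
    intro s hs
    dsimp only
    rw [huEeq s hs.1, hu2Eeq s hs.1, hkE''eq (t - s) (sub_nonneg.mpr hs.2)]
    ring
  -- main pointwise identity between the two representations
  have E1 : ∀ τ ∈ Ici (0 : ℝ),
      ((k τ - k 0) * (u τ) ^ 2 - ∫ s in (0 : ℝ)..τ, k' (τ - s) * (u s - u τ) ^ 2)
      = 2 * u τ * (∫ σ in (0 : ℝ)..τ, uE σ * kE' (τ - σ))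
        - ∫ σ in (0 : ℝ)..τ, u2E σ * kE' (τ - σ) := by
    intro τ hτ
    rw [hexp τ hτ, hCk τ hτ]
    ring
  have hu_t := hu t ht
  have hprod := ((hu_t.const_mul 2).mul hA).sub hB
  refine ⟨_, hprod.congr (fun y hy => E1 y hy) (E1 t ht), ?_⟩
  have hLHS : (∫ s in (0 : ℝ)..t, k' (t - s) * u s * u' t)
      = (∫ σ in (0 : ℝ)..t, uE σ * kE' (t - σ)) * u' t := by
    rw [intervalIntegral.integral_mul_const]
    congr 1
    apply intervalIntegral.integral_congr
    rw [uIcc_of_le ht]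
    intro s hs
    dsimp only
    rw [huEeq s hs.1, hkE'eq (t - s) (sub_nonneg.mpr hs.2)]
    ring
  rw [hLHS, hexp2, hCk', huEeq t ht, hu2Eeq t ht, hkE'eq 0 le_rfl]
  ring
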